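/- arXiv:2301.07784 — 9 statements merged into one kernel-verified Lean document; each statement's English description precedes it below -/
import Mathlib

section
/- For any natural numbers n and k, any family of linear functionals f : Fin k → (EuclideanSpace ℝ (Fin n) →ₗ[ℝ] ℝ), and any b : Fin k → ℝ, the polyhedron {x ∈ EuclideanSpace ℝ (Fin n) : ∀ i, f i x ≤ b i} has finitely many extreme points (its set of extreme points over ℝ is finite). -/
/-!
An extreme point `x` of `{x | ∀ i, f i x ≤ b i}` is determined by its set of active
constraints: a direction `d` killed by every active `f i` can be followed a little in both
senses `x ± t • d` without leaving the polyhedron (the inactive constraints have slack),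
so extremality forces `d = 0`. Hence `x ↦ {i | f i x = b i}` is injective on extreme
points, and there are only finitely many sets of constraints.
-/

open Filter Topology

theorem eq_zero_of_add_mem_of_sub_mem_of_mem_extremePoints {𝕜 E : Type*} [Field 𝕜]
    [LinearOrder 𝕜] [IsStrictOrderedRing 𝕜] [AddCommGroup E] [Module 𝕜 E] {A : Set E} {x v : E}
    (hx : x ∈ A.extremePoints 𝕜) (hadd : x + v ∈ A) (hsub : x - v ∈ A) : v = 0 := by
  have hmid : x ∈ openSegment 𝕜 (x + v) (x - v) :=
    ⟨1 / 2, 1 / 2, by norm_num, by norm_num, by norm_num, by module⟩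
  simpa using (mem_extremePoints.1 hx).2 _ hadd _ hsub hmid |>.1

section Polyhedron

variable {E ι : Type*} [AddCommGroup E] [Module ℝ E] (f : ι → E →ₗ[ℝ] ℝ) (b : ι → ℝ)

def activeSet (x : E) : Set ι := {i | f i x = b i}

theorem eventually_add_smul_mem_polyhedron [Finite ι] {x d : E} (hx : ∀ i, f i x ≤ b i)
    (hd : ∀ i ∈ activeSet f b x, f i d = 0) :
    ∀ᶠ t in 𝓝 (0 : ℝ), ∀ i, f i (x + t • d) ≤ b i := by
  refine eventually_all.2 fun i => ?_
  simp only [map_add, map_smul, smul_eq_mul]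
  rcases (hx i).eq_or_lt with hact | hlt
  · exact .of_forall fun t => by simp [hd i hact, hact]
  · have hcont : Continuous fun t : ℝ => f i x + t * f i d := by fun_prop
    exact (hcont.continuousAt.eventually_lt continuousAt_const (by simpa using hlt)).mono
      fun _ => le_of_lt

theorem eq_zero_of_forall_activeSet_of_mem_extremePoints [Finite ι] {x d : E}
    (hx : x ∈ {x | ∀ i, f i x ≤ b i}.extremePoints ℝ)
    (hd : ∀ i ∈ activeSet f b x, f i d = 0) : d = 0 := by
  have hnear := eventually_add_smul_mem_polyhedron f b (extremePoints_subset hx) hd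
  have hnear_neg : ∀ᶠ t in 𝓝 (0 : ℝ), ∀ i, f i (x + (-t) • d) ≤ b i := by
    have hneg : Tendsto (fun t : ℝ => -t) (𝓝 0) (𝓝 0) := by
      simpa only [neg_zero] using tendsto_neg (0 : ℝ)
    exact hneg.eventually hnear
  obtain ⟨t, ⟨hplus, hminus⟩, ht⟩ :=
    ((hnear.and hnear_neg).filter_mono nhdsWithin_le_nhds).and self_mem_nhdsWithin |>.exists
      (f := 𝓝[>] (0 : ℝ))
  rw [neg_smul, ← sub_eq_add_neg] at hminus
  have := eq_zero_of_add_mem_of_sub_mem_of_mem_extremePoints hx hplus hminus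
  exact (smul_eq_zero.1 this).resolve_left (ne_of_gt ht)

theorem injOn_activeSet_extremePoints [Finite ι] :
    Set.InjOn (activeSet f b) ({x | ∀ i, f i x ≤ b i}.extremePoints ℝ) := by
  intro x hx y _ hxy
  have hy_active : ∀ i ∈ activeSet f b x, f i y = b i := fun i hi =>
    show i ∈ activeSet f b y from hxy ▸ hi
  refine (sub_eq_zero.1 <| eq_zero_of_forall_activeSet_of_mem_extremePoints f b hx
    fun i hi => ?_).symm
  rw [map_sub, hy_active i hi, hi, sub_self]

end Polyhedron

/-- A polyhedron in `EuclideanSpace ℝ (Fin n)`, i.e. a set defined by finitely many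
linear inequalities, has finitely many extreme points. -/
theorem polyhedron_extremePoints_finite (n k : ℕ)
    (f : Fin k → (EuclideanSpace ℝ (Fin n) →ₗ[ℝ] ℝ)) (b : Fin k → ℝ) :
    (({x | ∀ i, f i x ≤ b i} : Set (EuclideanSpace ℝ (Fin n))).extremePoints ℝ).Finite :=
  (Set.toFinite _).of_finite_image (injOn_activeSet_extremePoints f b)
end

section
/- For any finite nonempty set V ⊆ EuclideanSpace ℝ (Fin m) and any index i ∈ Fin m, the i-th standard basis vector e_i (which has i-th coordinate 1 and all other coordinates 0, hence lies in the weight simplex W_m) is a corner weight of V. -/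
open scoped RealInnerProductSpace

/-- The scalarized value function `g_V(w) = max_{v ∈ V} ⟪v, w⟫`. -/
noncomputable def gVal {m : ℕ} (V : Set (EuclideanSpace ℝ (Fin m)))
    (w : EuclideanSpace ℝ (Fin m)) : ℝ :=
  sSup ((fun v => ⟪v, w⟫) '' V)

/-- The weight simplex `W_m`. -/
def weightSimplex (m : ℕ) : Set (EuclideanSpace ℝ (Fin m)) :=
  {w | (∀ i, 0 ≤ w i) ∧ ∑ i, w i = 1}

/-- The polyhedron `P(V)` whose vertices give the corner weights of `V`. -/
def cornerPolyhedron {m : ℕ} (V : Set (EuclideanSpace ℝ (Fin m))) :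
    Set (EuclideanSpace ℝ (Fin m) × ℝ) :=
  {x | x.1 ∈ weightSimplex m ∧ ∀ v ∈ V, ⟪v, x.1⟫ ≤ x.2}

/-- `w` is a corner weight of `V` if `w` is in the weight simplex and
`(w, g_V(w))` is an extreme point of the polyhedron `P(V)`. -/
def IsCornerWeight {m : ℕ} (V : Set (EuclideanSpace ℝ (Fin m)))
    (w : EuclideanSpace ℝ (Fin m)) : Prop :=
  w ∈ weightSimplex m ∧ (w, gVal V w) ∈ (cornerPolyhedron V).extremePoints ℝ

/-!
The point `(e_i, g_V(e_i))` lies over a vertex of the simplex (`e_i` is exposed by `w ↦ w i`) and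
is the lowest point of `P(V)` over it. An open segment of `P(V)` through such a point must be
vertical, and a vertical segment cannot dip below the lowest point.
-/

section ExtremePointsOverBase

variable {𝕜 E : Type*} [CommRing 𝕜] [LinearOrder 𝕜] [IsStrictOrderedRing 𝕜]
  [AddCommGroup E] [Module 𝕜 E]

theorem mk_mem_extremePoints_of_isLeast {P : Set (E × 𝕜)} {S : Set E} {w : E} {t : 𝕜}
    (hPS : ∀ x ∈ P, x.1 ∈ S) (hw : w ∈ S.extremePoints 𝕜) (ht : IsLeast {s | (w, s) ∈ P} t) :
    (w, t) ∈ P.extremePoints 𝕜 := by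
  refine ⟨ht.1, ?_⟩
  rintro ⟨w₁, t₁⟩ h₁ ⟨w₂, t₂⟩ h₂ ⟨a, b, ha, hb, hab, hseg⟩
  simp only [Prod.smul_mk, Prod.mk_add_mk, Prod.mk.injEq, smul_eq_mul] at hseg ⊢
  obtain ⟨hw_seg, ht_seg⟩ := hseg
  have hw₁ : w₁ = w := hw.2 (hPS _ h₁) (hPS _ h₂) ⟨a, b, ha, hb, hab, hw_seg⟩
  have hw₂ : w₂ = w :=
    hw.2 (hPS _ h₂) (hPS _ h₁) ⟨b, a, hb, ha, by rwa [add_comm], by rwa [add_comm]⟩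
  have ht₁ : t ≤ t₁ := ht.2 (hw₁ ▸ h₁)
  have ht₂ : t ≤ t₂ := ht.2 (hw₂ ▸ h₂)
  have hsplit : a * (t₁ - t) + b * (t₂ - t) = 0 := by linear_combination ht_seg - t * hab
  have hzero := (add_eq_zero_iff_of_nonneg (mul_nonneg ha.le (sub_nonneg.2 ht₁))
    (mul_nonneg hb.le (sub_nonneg.2 ht₂))).1 hsplit
  exact ⟨hw₁, sub_eq_zero.1 ((mul_eq_zero.1 hzero.1).resolve_left ha.ne')⟩

end ExtremePointsOverBase

section WeightSimplex

variable {m : ℕ}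

theorem single_mem_weightSimplex (i : Fin m) : EuclideanSpace.single i (1 : ℝ) ∈ weightSimplex m :=
  ⟨fun j => by by_cases h : j = i <;> simp [h], by simp⟩

theorem apply_le_one_of_mem_weightSimplex {w : EuclideanSpace ℝ (Fin m)} (hw : w ∈ weightSimplex m)
    (i : Fin m) : w i ≤ 1 :=
  hw.2 ▸ Finset.single_le_sum (fun j _ => hw.1 j) (Finset.mem_univ i)

theorem eq_single_of_mem_weightSimplex {w : EuclideanSpace ℝ (Fin m)} (hw : w ∈ weightSimplex m)
    {i : Fin m} (hi : 1 ≤ w i) : w = EuclideanSpace.single i 1 := by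
  have hsum := hw.2
  rw [← Finset.add_sum_erase _ _ (Finset.mem_univ i)] at hsum
  have hrest_sum : ∑ j ∈ Finset.univ.erase i, w j = 0 :=
    le_antisymm (by linarith) (Finset.sum_nonneg fun j _ => hw.1 j)
  have hrest := (Finset.sum_eq_zero_iff_of_nonneg fun j _ => hw.1 j).1 hrest_sum
  ext j
  by_cases hj : j = i
  · subst hj
    simp only [PiLp.single_apply, if_true]
    linarith
  · simpa [hj] using hrest j (Finset.mem_erase.2 ⟨hj, Finset.mem_univ j⟩)

theorem single_mem_exposedPoints_weightSimplex (i : Fin m) :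
    EuclideanSpace.single i (1 : ℝ) ∈ (weightSimplex m).exposedPoints ℝ :=
  ⟨single_mem_weightSimplex i, EuclideanSpace.proj i, fun w hw => by
    simp only [EuclideanSpace.proj, PiLp.proj_apply, PiLp.single_apply, if_true]
    exact ⟨apply_le_one_of_mem_weightSimplex hw i, eq_single_of_mem_weightSimplex hw⟩⟩

end WeightSimplex

theorem isLeast_gVal {m : ℕ} {V : Set (EuclideanSpace ℝ (Fin m))} (hVfin : V.Finite)
    (hVne : V.Nonempty) {w : EuclideanSpace ℝ (Fin m)} (hw : w ∈ weightSimplex m) :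
    IsLeast {t | (w, t) ∈ cornerPolyhedron V} (gVal V w) := by
  have hfiber : {t | (w, t) ∈ cornerPolyhedron V} = upperBounds ((fun v => ⟪v, w⟫) '' V) := by
    ext t
    simp [cornerPolyhedron, hw, upperBounds]
  rw [hfiber]
  exact isLUB_csSup (hVne.image _) (hVfin.image _).bddAbove

/-- Every extremum weight (standard basis vector of the simplex) is a corner weight. -/
theorem extremum_weight_isCornerWeight {m : ℕ} (V : Set (EuclideanSpace ℝ (Fin m)))
    (hVfin : V.Finite) (hVne : V.Nonempty) (i : Fin m) :
    IsCornerWeight V (EuclideanSpace.single i (1 : ℝ)) :=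
  ⟨single_mem_weightSimplex i,
    mk_mem_extremePoints_of_isLeast (fun _ hx => hx.1)
      (exposedPoints_subset_extremePoints (single_mem_exposedPoints_weightSimplex i))
      (isLeast_gVal hVfin hVne (single_mem_weightSimplex i))⟩
end

section
/- Let F and V be finite nonempty subsets of EuclideanSpace ℝ (Fin m) and let ε ≥ 0. If g_F(w) − g_V(w) ≤ ε for every corner weight w of V, then g_F(w) − g_V(w) ≤ ε for every w in the weight simplex W_m; that is, if no corner weight admits a utility improvement greater than ε, then V is an ε-CCS (and for ε = 0, V is a CCS). -/
open scoped RealInnerProductSpace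

/-! The polyhedron `P(V)` is the epigraph of the convex function `g_V` over the compact simplex.
Truncating it at a height `T` above both `g_V` and `g_F - ε` gives a compact convex set whose
extreme points either lie on the top face, where `g_F - ε ≤ T` holds trivially, or are extreme
points of `P(V)` itself, hence of the form `(w, g_V w)` with `w` a corner weight. The closed convex
set `{(w, t) | g_F w - ε ≤ t}` contains all of these, so by Krein–Milman it contains the whole
truncated polyhedron, in particular every point `(w, g_V w)`. -/

open Filter Topology Set

theorem mem_extremePoints_of_mem_extremePoints_inter {E : Type*} [AddCommGroup E] [Module ℝ E]
    [TopologicalSpace E] [ContinuousAdd E] [ContinuousSMul ℝ E] {A B : Set E} {x : E}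
    (hA : Convex ℝ A) (hB : B ∈ 𝓝 x) (hx : x ∈ (A ∩ B).extremePoints ℝ) :
    x ∈ A.extremePoints ℝ := by
  refine ⟨hx.1.1, fun y hy z hz hxyz => ?_⟩
  have hnear (p : E) : ∀ᶠ t in 𝓝[>] (0 : ℝ), x + t • (p - x) ∈ B := by
    have : Tendsto (fun t : ℝ => x + t • (p - x)) (𝓝 0) (𝓝 x) := by
      simpa using ((continuous_id.smul continuous_const).const_add x).tendsto (0 : ℝ)
    exact nhdsWithin_le_nhds (this hB)
  obtain ⟨t, hyB, hzB, ht⟩ :=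
    ((hnear y).and ((hnear z).and (Ioc_mem_nhdsGT one_pos))).exists
  obtain ⟨a, b, ha, hb, hab, hxyz⟩ := hxyz
  have hshrunk : x ∈ openSegment ℝ (x + t • (y - x)) (x + t • (z - x)) := by
    refine ⟨a, b, ha, hb, hab, ?_⟩
    calc a • (x + t • (y - x)) + b • (x + t • (z - x))
        = (a + b) • x + t • (a • y + b • z - (a + b) • x) := by module
      _ = x := by rw [hab, hxyz, one_smul, sub_self, smul_zero, add_zero]
  have hy' := hx.2 ⟨hA.add_smul_sub_mem hx.1.1 hy ⟨ht.1.le, ht.2⟩, hyB⟩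
    ⟨hA.add_smul_sub_mem hx.1.1 hz ⟨ht.1.le, ht.2⟩, hzB⟩ hshrunk
  rw [add_eq_left, smul_eq_zero, sub_eq_zero] at hy'
  exact hy'.resolve_left ht.1.ne'

theorem eq_of_mem_extremePoints_epigraph {E : Type*} [AddCommGroup E] [Module ℝ E]
    {K : Set E} {f : E → ℝ} {p : E × ℝ}
    (hp : p ∈ {q : E × ℝ | q.1 ∈ K ∧ f q.1 ≤ q.2}.extremePoints ℝ) : p.2 = f p.1 := by
  obtain ⟨⟨hpK, hfp⟩, hext⟩ := hp
  by_contra hne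
  have hmid : p ∈ openSegment ℝ (p.1, f p.1) (p.1, 2 * p.2 - f p.1) :=
    ⟨1 / 2, 1 / 2, by norm_num, by norm_num, by norm_num,
      Prod.ext (by rw [Prod.fst_add, Prod.smul_fst, Prod.smul_fst, ← add_smul]; norm_num)
        (by simp only [Prod.snd_add, Prod.smul_snd, smul_eq_mul]; ring)⟩
  exact hne (congrArg Prod.snd (hext (x₁ := (p.1, f p.1)) (x₂ := (p.1, 2 * p.2 - f p.1))
    ⟨hpK, le_rfl⟩ ⟨hpK, by linarith⟩ hmid)).symm

theorem ConvexOn.le_of_le_on_extremePoints_epigraph {E : Type*} [AddCommGroup E] [Module ℝ E]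
    [TopologicalSpace E] [T2Space E] [IsTopologicalAddGroup E] [ContinuousSMul ℝ E]
    [LocallyConvexSpace ℝ E] {K : Set E} {f g : E → ℝ} (hK : IsCompact K)
    (hf : ConvexOn ℝ K f) (hfc : ContinuousOn f K) (hg : ConvexOn ℝ K g) (hgc : ContinuousOn g K)
    (h : ∀ u ∈ K, (u, f u) ∈ {p : E × ℝ | p.1 ∈ K ∧ f p.1 ≤ p.2}.extremePoints ℝ → g u ≤ f u) :
    ∀ u ∈ K, g u ≤ f u := by
  obtain ⟨T, hT⟩ := hK.bddAbove_image (hfc.sup hgc)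
  obtain ⟨a, ha⟩ := hK.bddBelow_image hfc
  have hfT {u : E} (hu : u ∈ K) : f u ≤ T := le_sup_left.trans (hT ⟨u, hu, rfl⟩)
  have hgT {u : E} (hu : u ∈ K) : g u ≤ T := le_sup_right.trans (hT ⟨u, hu, rfl⟩)
  set P := {p : E × ℝ | p.1 ∈ K ∧ f p.1 ≤ p.2} ∩ {p | p.2 ≤ T}
  have hPconv : Convex ℝ P := hf.convex_epigraph.inter (convex_halfSpace_le (f := Prod.snd)
    ⟨fun _ _ => rfl, fun _ _ => rfl⟩ T)
  have hPcompact : IsCompact P :=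
    (hK.prod (isCompact_Icc (a := a) (b := T))).of_isClosed_subset
      ((hK.isClosed.epigraph hfc).inter (isClosed_le continuous_snd continuous_const))
      fun p ⟨⟨hpK, hfp⟩, hpT⟩ => ⟨hpK, (ha ⟨p.1, hpK, rfl⟩).trans hfp, hpT⟩
  have hext : P.extremePoints ℝ ⊆ {p | p.1 ∈ K ∧ g p.1 ≤ p.2} := by
    intro p hp
    obtain ⟨⟨hpK, -⟩, hpT⟩ := hp.1
    refine ⟨hpK, ?_⟩
    rcases (show p.2 ≤ T from hpT).eq_or_lt with hpT | hpT
    · exact hpT ▸ hgT hpK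
    have hpext : p ∈ {p : E × ℝ | p.1 ∈ K ∧ f p.1 ≤ p.2}.extremePoints ℝ :=
      mem_extremePoints_of_mem_extremePoints_inter hf.convex_epigraph
        (continuous_snd.continuousAt.preimage_mem_nhds (Iic_mem_nhds hpT)) hp
    have hp2 := eq_of_mem_extremePoints_epigraph hpext
    rw [hp2]
    exact h p.1 hpK (hp2 ▸ hpext)
  have hPg : P ⊆ {p | p.1 ∈ K ∧ g p.1 ≤ p.2} := by
    rw [← closure_convexHull_extremePoints hPcompact hPconv]
    exact closure_minimal (convexHull_min hext hg.convex_epigraph) (hK.isClosed.epigraph hgc)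
  exact fun u hu => (hPg (a := (u, f u)) ⟨⟨hu, le_rfl⟩, hfT hu⟩).2

section gVal

variable {m : ℕ} {V : Set (EuclideanSpace ℝ (Fin m))}

theorem gVal_eq_sup' (hV : V.Finite) (hne : V.Nonempty) (w : EuclideanSpace ℝ (Fin m)) :
    gVal V w = hV.toFinset.sup' (hV.toFinset_nonempty.2 hne) (fun v => ⟪v, w⟫) := by
  rw [Finset.sup'_eq_csSup_image, hV.coe_toFinset]
  rfl

theorem gVal_le_iff (hV : V.Finite) (hne : V.Nonempty) {w : EuclideanSpace ℝ (Fin m)} {t : ℝ} :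
    gVal V w ≤ t ↔ ∀ v ∈ V, ⟪v, w⟫ ≤ t := by
  simp [gVal_eq_sup' hV hne]

theorem continuous_gVal (hV : V.Finite) (hne : V.Nonempty) : Continuous (gVal V) := by
  simp_rw [funext (gVal_eq_sup' hV hne)]
  exact Continuous.finset_sup'_apply _ fun v _ => continuous_const.inner continuous_id

theorem convexOn_gVal (hV : V.Finite) (hne : V.Nonempty) : ConvexOn ℝ univ (gVal V) :=
  ⟨convex_univ, fun x _ y _ a b ha hb _ => (gVal_le_iff hV hne).2 fun v hv => by
    rw [inner_add_right, real_inner_smul_right, real_inner_smul_right, smul_eq_mul, smul_eq_mul]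
    gcongr
    exacts [(gVal_le_iff hV hne).1 le_rfl v hv, (gVal_le_iff hV hne).1 le_rfl v hv]⟩

theorem cornerPolyhedron_eq_epigraph (hV : V.Finite) (hne : V.Nonempty) :
    cornerPolyhedron V = {p | p.1 ∈ weightSimplex m ∧ gVal V p.1 ≤ p.2} :=
  Set.ext fun _ => and_congr_right fun _ => (gVal_le_iff hV hne).symm

end gVal

theorem weightSimplex_eq_preimage_stdSimplex (m : ℕ) :
    weightSimplex m = EuclideanSpace.equiv (Fin m) ℝ ⁻¹' stdSimplex ℝ (Fin m) :=
  rfl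

theorem isCompact_weightSimplex (m : ℕ) : IsCompact (weightSimplex m) := by
  rw [weightSimplex_eq_preimage_stdSimplex]
  exact (EuclideanSpace.equiv (Fin m) ℝ).toHomeomorph.isCompact_preimage.2
    (isCompact_stdSimplex _ _)

theorem convex_weightSimplex (m : ℕ) : Convex ℝ (weightSimplex m) := by
  rw [weightSimplex_eq_preimage_stdSimplex]
  exact (convex_stdSimplex ℝ _).linear_preimage (EuclideanSpace.equiv (Fin m) ℝ).toLinearMap

theorem epsCCS_of_corner_weights_general {m : ℕ}
    (F V : Set (EuclideanSpace ℝ (Fin m)))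
    (hFfin : F.Finite) (hFne : F.Nonempty) (hVfin : V.Finite) (hVne : V.Nonempty)
    (ε : ℝ)
    (h : ∀ w, IsCornerWeight V w → gVal F w - gVal V w ≤ ε) :
    ∀ w ∈ weightSimplex m, gVal F w - gVal V w ≤ ε := by
  intro w hw
  have hsimplex := convex_weightSimplex m
  have hloss := ConvexOn.le_of_le_on_extremePoints_epigraph (g := fun u => gVal F u - ε)
    (isCompact_weightSimplex m)
    ((convexOn_gVal hVfin hVne).subset (subset_univ _) hsimplex)
    (continuous_gVal hVfin hVne).continuousOn
    (((convexOn_gVal hFfin hFne).subset (subset_univ _) hsimplex).add_const (-ε))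
    ((continuous_gVal hFfin hFne).add continuous_const).continuousOn
    (fun u hu hcorner => by
      have := h u ⟨hu, cornerPolyhedron_eq_epigraph hVfin hVne ▸ hcorner⟩
      linarith) w hw
  linarith

/-- If the utility loss `g_F(w) − g_V(w)` is at most `ε` at every corner weight of `V`,
then it is at most `ε` at every weight in the simplex, i.e. `V` is an `ε`-CCS. -/
theorem epsCCS_of_corner_weights {m : ℕ}
    (F V : Set (EuclideanSpace ℝ (Fin m)))
    (hFfin : F.Finite) (hFne : F.Nonempty) (hVfin : V.Finite) (hVne : V.Nonempty)
    (ε : ℝ) (hε : 0 ≤ ε)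
    (h : ∀ w, IsCornerWeight V w → gVal F w - gVal V w ≤ ε) :
    ∀ w ∈ weightSimplex m, gVal F w - gVal V w ≤ ε :=
  epsCCS_of_corner_weights_general F V hFfin hFne hVfin hVne ε h
end

section
/- In a finite MOMDP, let π and π' be policies and w a weight vector such that for every state s, q^π_w s (π' s) ≥ q^π_w s (π s). Then q^{π'}_w s a ≥ q^π_w s a for every state s and action a (policy improvement for scalarized values). -/
open scoped RealInnerProductSpace

/-- Policy improvement for scalarized values in a finite MOMDP: if for every state `s`
the scalarized value of `π` at `(s, π' s)` is at least its value at `(s, π s)`, then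
the scalarized action-values of `π'` dominate those of `π` everywhere. -/
theorem policy_improvement_scalarized {m : ℕ} {S A : Type}
    [Fintype S] [Fintype A] [Nonempty S] [Nonempty A]
    (p : S → A → S → ℝ) (hp0 : ∀ s a s', 0 ≤ p s a s')
    (hp1 : ∀ s a, ∑ s', p s a s' = 1)
    (r : S → A → EuclideanSpace ℝ (Fin m))
    (γ : ℝ) (hγ0 : 0 ≤ γ) (hγ1 : γ < 1)
    (π π' : S → A) (w : EuclideanSpace ℝ (Fin m))
    -- multi-objective action-value functions of `π` and `π'`
    (qπ qπ' : S → A → EuclideanSpace ℝ (Fin m))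
    (hqπ : ∀ s a, qπ s a = r s a + γ • ∑ s', p s a s' • qπ s' (π s'))
    (hqπ' : ∀ s a, qπ' s a = r s a + γ • ∑ s', p s a s' • qπ' s' (π' s'))
    (h : ∀ s, ⟪qπ s (π s), w⟫ ≤ ⟪qπ s (π' s), w⟫) :
    ∀ s a, ⟪qπ s a, w⟫ ≤ ⟪qπ' s a, w⟫ := by
  set d : S → A → ℝ := fun s a => ⟪qπ s a, w⟫ - ⟪qπ' s a, w⟫ with hd
  have key : ∀ s a, d s a =
      γ * ∑ s', p s a s' * (⟪qπ s' (π s'), w⟫ - ⟪qπ' s' (π' s'), w⟫) := by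
    intro s a
    have h1 : ⟪qπ s a, w⟫ = ⟪r s a, w⟫ + γ * ∑ s', p s a s' * ⟪qπ s' (π s'), w⟫ := by
      rw [hqπ s a, inner_add_left, real_inner_smul_left, sum_inner]
      simp [real_inner_smul_left, Finset.mul_sum, mul_assoc]
    have h2 : ⟪qπ' s a, w⟫ = ⟪r s a, w⟫ + γ * ∑ s', p s a s' * ⟪qπ' s' (π' s'), w⟫ := by
      rw [hqπ' s a, inner_add_left, real_inner_smul_left, sum_inner]
      simp [real_inner_smul_left, Finset.mul_sum, mul_assoc]
    simp only [hd, h1, h2]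
    simp only [mul_sub, Finset.sum_sub_distrib]
    ring
  obtain ⟨⟨s0, a0⟩, -, hmax⟩ :=
    Finset.exists_max_image (Finset.univ : Finset (S × A)) (fun sa => d sa.1 sa.2)
      Finset.univ_nonempty
  set M : ℝ := d s0 a0 with hM
  have hmax' : ∀ s a, d s a ≤ M := fun s a => hmax (s, a) (Finset.mem_univ _)
  have hstep : ∀ s a, d s a ≤ γ * M := by
    intro s a
    rw [key s a]
    have : ∑ s', p s a s' * (⟪qπ s' (π s'), w⟫ - ⟪qπ' s' (π' s'), w⟫) ≤
        ∑ s', p s a s' * M := by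
      apply Finset.sum_le_sum
      intro s' _
      apply mul_le_mul_of_nonneg_left _ (hp0 s a s')
      calc ⟪qπ s' (π s'), w⟫ - ⟪qπ' s' (π' s'), w⟫
          ≤ ⟪qπ s' (π' s'), w⟫ - ⟪qπ' s' (π' s'), w⟫ := by linarith [h s']
        _ = d s' (π' s') := rfl
        _ ≤ M := hmax' s' (π' s')
    calc γ * ∑ s', p s a s' * (⟪qπ s' (π s'), w⟫ - ⟪qπ' s' (π' s'), w⟫)
        ≤ γ * ∑ s', p s a s' * M := by exact mul_le_mul_of_nonneg_left this hγ0
      _ = γ * M := by rw [← Finset.sum_mul, hp1 s a, one_mul]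
  have hM0 : M ≤ 0 := by
    have := hstep s0 a0
    nlinarith
  intro s a
  have := le_trans (hstep s a) (by nlinarith : γ * M ≤ 0)
  simp only [hd] at this
  linarith
end

section
/- In a finite MOMDP, let Π be a finite nonempty set of policies, let w be a weight vector, let π̂ ∈ Π, and let π^GPI be any GPI policy for w over Π. Then q^GPI_w s a = ⟪q^{π̂} s a, w⟫ for all states s and actions a if and only if q*_w s a = ⟪q^{π̂} s a, w⟫ for all states s and actions a; that is, π̂ is an optimal policy for w if and only if the GPI policy computed over Π cannot improve the scalarized action-value of π̂ at any state-action pair. -/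
open scoped RealInnerProductSpace

/-- Scalar version of the GPI no-improvement theorem. -/
theorem gpi_aux {S A : Type}
    [Fintype S] [Fintype A] [Nonempty S] [Nonempty A]
    (p : S → A → S → ℝ) (hp0 : ∀ s a s', 0 ≤ p s a s')
    (hp1 : ∀ s a, ∑ s', p s a s' = 1)
    (c : S → A → ℝ)
    (γ : ℝ) (hγ0 : 0 ≤ γ) (hγ1 : γ < 1)
    (Pols : Finset (S → A)) (hPols : Pols.Nonempty)
    (qw : (S → A) → S → A → ℝ)
    (hqw : ∀ π s a, qw π s a = c s a + γ * ∑ s', p s a s' * qw π s' (π s'))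
    (qstar : S → A → ℝ)
    (hqstar : ∀ s a, qstar s a = c s a + γ * ∑ s', p s a s' *
      ((Finset.univ : Finset A).sup' Finset.univ_nonempty (fun a' => qstar s' a')))
    (πhat : S → A) (hπhat : πhat ∈ Pols)
    (πg : S → A)
    (hπg : ∀ s a, Pols.sup' hPols (fun π => qw π s a) ≤
      Pols.sup' hPols (fun π => qw π s (πg s))) :
    (∀ s a, qw πg s a = qw πhat s a) ↔
    (∀ s a, qstar s a = qw πhat s a) := by
  classical
  -- the key contraction lemma
  have key : ∀ (g : S → A → ℝ) (h : S → ℝ),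
      (∀ s a, g s a ≤ γ * ∑ s', p s a s' * h s') →
      (∀ s', ∃ a, h s' ≤ g s' a) → ∀ s a, g s a ≤ 0 := by
    intro g h hle hh
    set K := (Finset.univ : Finset (S × A)).sup' Finset.univ_nonempty
      (fun x => g x.1 x.2) with hKdef
    have hK : ∀ s a, g s a ≤ K := fun s a => Finset.le_sup' (fun x : S × A => g x.1 x.2) (Finset.mem_univ (s, a))
    have hhK : ∀ s', h s' ≤ K := by
      intro s'; obtain ⟨a', ha'⟩ := hh s'; exact ha'.trans (hK s' a')
    have hKγ : K ≤ γ * K := by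
      obtain ⟨x, -, hx⟩ := Finset.exists_mem_eq_sup' (Finset.univ_nonempty)
        (fun x : S × A => g x.1 x.2)
      have h1 : ∑ s', p x.1 x.2 s' * h s' ≤ ∑ s', p x.1 x.2 s' * K :=
        Finset.sum_le_sum (fun s' _ => mul_le_mul_of_nonneg_left (hhK s') (hp0 _ _ _))
      have h2 : ∑ s', p x.1 x.2 s' * K = K := by
        rw [← Finset.sum_mul, hp1, one_mul]
      calc K = g x.1 x.2 := by rw [hKdef, hx]
        _ ≤ γ * ∑ s', p x.1 x.2 s' * h s' := hle x.1 x.2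
        _ ≤ γ * ∑ s', p x.1 x.2 s' * K := by nlinarith
        _ = γ * K := by rw [h2]
    have hK0 : K ≤ 0 := by nlinarith
    exact fun s a => (hK s a).trans hK0
  -- every policy's value is dominated by qstar
  have hle_star : ∀ π s a, qw π s a ≤ qstar s a := by
    intro π
    have h0 : ∀ s a, qw π s a - qstar s a ≤ 0 := by
      apply key (fun s a => qw π s a - qstar s a)
        (fun s' => qw π s' (π s') - qstar s' (π s'))
      · intro s a
        have hM : ∀ s', qstar s' (π s') ≤
            (Finset.univ : Finset A).sup' Finset.univ_nonempty (fun a' => qstar s' a') :=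
          fun s' => Finset.le_sup' _ (Finset.mem_univ (π s'))
        have hsum : ∑ s', p s a s' * qw π s' (π s')
            - ∑ s', p s a s' * ((Finset.univ : Finset A).sup' Finset.univ_nonempty
              (fun a' => qstar s' a'))
            ≤ ∑ s', p s a s' * (qw π s' (π s') - qstar s' (π s')) := by
          rw [← Finset.sum_sub_distrib]
          apply Finset.sum_le_sum
          intro s' _
          have := hM s'
          have := hp0 s a s'
          nlinarith
        rw [hqw π s a, hqstar s a]
        nlinarith
      · intro s'; exact ⟨π s', le_refl _⟩
    intro s a; linarith [h0 s a]
  -- the GPI improvement bound: qw πg dominates the sup over Pols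
  set F : S → A → ℝ := fun s a => Pols.sup' hPols (fun π => qw π s a) with hFdef
  have hFπ : ∀ π ∈ Pols, ∀ s a, qw π s a ≤ F s a :=
    fun π hπ s a => Finset.le_sup' (fun π => qw π s a) hπ
  have hFg : ∀ s a, F s a ≤ F s (πg s) := fun s a => hπg s a
  have hF_le : ∀ s a, F s a ≤ qw πg s a := by
    have h0 : ∀ s a, F s a - qw πg s a ≤ 0 := by
      apply key (fun s a => F s a - qw πg s a)
        (fun s' => F s' (πg s') - qw πg s' (πg s'))
      · intro s a
        have : F s a ≤ qw πg s a + γ * ∑ s', p s a s' * (F s' (πg s') - qw πg s' (πg s')) := by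
          apply Finset.sup'_le
          intro π hπ
          have hsum : ∑ s', p s a s' * qw π s' (π s')
              - ∑ s', p s a s' * qw πg s' (πg s')
              ≤ ∑ s', p s a s' * (F s' (πg s') - qw πg s' (πg s')) := by
            rw [← Finset.sum_sub_distrib]
            apply Finset.sum_le_sum
            intro s' _
            have h1 : qw π s' (π s') ≤ F s' (πg s') :=
              (hFπ π hπ s' (π s')).trans (hFg s' (π s'))
            have := hp0 s a s'
            nlinarith
          rw [hqw π s a, hqw πg s a]
          nlinarith
        linarith
      · intro s'; exact ⟨πg s', le_refl _⟩
    intro s a; linarith [h0 s a]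
  constructor
  · -- no improvement → optimal
    intro heq
    -- πg is greedy with respect to qw πhat
    have hgreedy : ∀ s a, qw πhat s a ≤ qw πhat s (πg s) := by
      intro s a
      calc qw πhat s a ≤ F s a := hFπ πhat hπhat s a
        _ ≤ F s (πg s) := hFg s a
        _ ≤ qw πg s (πg s) := hF_le s (πg s)
        _ = qw πhat s (πg s) := heq s (πg s)
    -- the max of qw πhat over actions is attained at πg
    have hMh : ∀ s, (Finset.univ : Finset A).sup' Finset.univ_nonempty
        (fun a' => qw πhat s a') = qw πhat s (πg s) := by
      intro s
      apply le_antisymm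
      · exact Finset.sup'_le _ _ (fun a _ => hgreedy s a)
      · exact Finset.le_sup' _ (Finset.mem_univ (πg s))
    -- qw πhat satisfies the optimality Bellman equation
    have hOpt : ∀ s a, qw πhat s a = c s a + γ * ∑ s', p s a s' *
        ((Finset.univ : Finset A).sup' Finset.univ_nonempty (fun a' => qw πhat s' a')) := by
      intro s a
      rw [← heq s a, hqw πg s a]
      congr 1
      congr 1
      apply Finset.sum_congr rfl
      intro s' _
      rw [hMh s', heq s' (πg s')]
    intro s a
    have h1 : qw πhat s a ≤ qstar s a := hle_star πhat s a
    have h2 : qstar s a - qw πhat s a ≤ 0 := by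
      apply key (fun s a => qstar s a - qw πhat s a)
        (fun s' => (Finset.univ : Finset A).sup' Finset.univ_nonempty (fun a' => qstar s' a')
          - (Finset.univ : Finset A).sup' Finset.univ_nonempty (fun a' => qw πhat s' a'))
      · intro s a
        rw [hqstar s a, hOpt s a]
        have : ∑ s', p s a s' * ((Finset.univ : Finset A).sup' Finset.univ_nonempty
              (fun a' => qstar s' a'))
            - ∑ s', p s a s' * ((Finset.univ : Finset A).sup' Finset.univ_nonempty
              (fun a' => qw πhat s' a'))
            = ∑ s', p s a s' * ((Finset.univ : Finset A).sup' Finset.univ_nonempty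
                (fun a' => qstar s' a')
              - (Finset.univ : Finset A).sup' Finset.univ_nonempty
                (fun a' => qw πhat s' a')) := by
          rw [← Finset.sum_sub_distrib]
          apply Finset.sum_congr rfl
          intro s' _; ring
        nlinarith
      · intro s'
        obtain ⟨a', -, ha'⟩ := Finset.exists_mem_eq_sup' (Finset.univ_nonempty
          (α := A)) (fun a' => qstar s' a')
        refine ⟨a', ?_⟩
        have h3 : qw πhat s' a' ≤ (Finset.univ : Finset A).sup' Finset.univ_nonempty
            (fun a' => qw πhat s' a') := Finset.le_sup' _ (Finset.mem_univ a')
        rw [ha']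
        linarith
    linarith
  · -- optimal → no improvement
    intro hopt s a
    have h1 : qw πg s a ≤ qstar s a := hle_star πg s a
    have h2 : qw πhat s a ≤ F s a := hFπ πhat hπhat s a
    have h3 : F s a ≤ qw πg s a := hF_le s a
    have h4 := hopt s a
    linarith

/-- In a finite MOMDP, a policy `π̂ ∈ Π` is optimal for a weight vector `w` if and only
if the GPI policy computed over `Π` cannot improve the scalarized action-values of `π̂`
at any state-action pair. -/
theorem gpi_no_improvement_iff_optimal {m : ℕ} {S A : Type}
    [Fintype S] [Fintype A] [Nonempty S] [Nonempty A]
    (p : S → A → S → ℝ) (hp0 : ∀ s a s', 0 ≤ p s a s')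
    (hp1 : ∀ s a, ∑ s', p s a s' = 1)
    (r : S → A → EuclideanSpace ℝ (Fin m))
    (γ : ℝ) (hγ0 : 0 ≤ γ) (hγ1 : γ < 1)
    -- the finite nonempty set of policies `Π`
    (Pols : Finset (S → A)) (hPols : Pols.Nonempty)
    (w : EuclideanSpace ℝ (Fin m))
    -- `q π` is the multi-objective action-value function of policy `π`
    (q : (S → A) → S → A → EuclideanSpace ℝ (Fin m))
    (hq : ∀ π : S → A, ∀ s a, q π s a = r s a + γ • ∑ s', p s a s' • q π s' (π s'))
    -- `qstar` is the optimal scalarized action-value function for `w`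
    (qstar : S → A → ℝ)
    (hqstar : ∀ s a, qstar s a = ⟪r s a, w⟫ + γ * ∑ s', p s a s' *
      ((Finset.univ : Finset A).sup' Finset.univ_nonempty (fun a' => qstar s' a')))
    -- `πhat` is a policy in `Π`
    (πhat : S → A) (hπhat : πhat ∈ Pols)
    -- `πg` is a GPI policy for `w` over `Π`
    (πg : S → A)
    (hπg : ∀ s a, Pols.sup' hPols (fun π => ⟪q π s a, w⟫) ≤
      Pols.sup' hPols (fun π => ⟪q π s (πg s), w⟫)) :
    (∀ s a, ⟪q πg s a, w⟫ = ⟪q πhat s a, w⟫) ↔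
    (∀ s a, qstar s a = ⟪q πhat s a, w⟫) := by
  have hqw : ∀ π s a, ⟪q π s a, w⟫ = ⟪r s a, w⟫ +
      γ * ∑ s', p s a s' * ⟪q π s' (π s'), w⟫ := by
    intro π s a
    rw [hq π s a, inner_add_left, real_inner_smul_left, sum_inner]
    congr 2
    apply Finset.sum_congr rfl
    intro s' _
    rw [real_inner_smul_left]
  exact gpi_aux p hp0 hp1 (fun s a => ⟪r s a, w⟫) γ hγ0 hγ1 Pols hPols
    (fun π s a => ⟪q π s a, w⟫) hqw qstar hqstar πhat hπhat πg hπg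
end

section
/- In a finite MOMDP, let Π be a finite nonempty set of policies, let w be a weight vector, and define the one-step GPI value q^{1-GPI}_w s a = ⟪r s a, w⟫ + γ * ∑_{s'} p s a s' * (max_{a'} max_{π ∈ Π} ⟪q^π s' a', w⟫). Then for every policy π ∈ Π, every GPI policy π^GPI for w over Π, and all states s and actions a: q^GPI_w s a ≥ q^{1-GPI}_w s a ≥ ⟪q^π s a, w⟫. -/
open scoped RealInnerProductSpace

/-- In a finite MOMDP, the one-step GPI value `q^{1-GPI}_w` is sandwiched between the
scalarized action-values of the GPI policy and those of every policy in `Π`: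
`q^GPI_w s a ≥ q^{1-GPI}_w s a ≥ ⟪q^π s a, w⟫`. -/
theorem one_step_gpi_sandwich {m : ℕ} {S A : Type}
    [Fintype S] [Fintype A] [Nonempty S] [Nonempty A]
    (p : S → A → S → ℝ) (hp0 : ∀ s a s', 0 ≤ p s a s')
    (hp1 : ∀ s a, ∑ s', p s a s' = 1)
    (r : S → A → EuclideanSpace ℝ (Fin m))
    (γ : ℝ) (hγ0 : 0 ≤ γ) (hγ1 : γ < 1)
    -- the finite nonempty set of policies `Π`
    (Pols : Finset (S → A)) (hPols : Pols.Nonempty)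
    (w : EuclideanSpace ℝ (Fin m))
    -- `q π` is the multi-objective action-value function of policy `π`
    (q : (S → A) → S → A → EuclideanSpace ℝ (Fin m))
    (hq : ∀ π : S → A, ∀ s a, q π s a = r s a + γ • ∑ s', p s a s' • q π s' (π s'))
    -- `q1gpi` is the one-step GPI value function for `w` over `Π`
    (q1gpi : S → A → ℝ)
    (hq1gpi : ∀ s a, q1gpi s a = ⟪r s a, w⟫ + γ * ∑ s', p s a s' *
      ((Finset.univ : Finset A).sup' Finset.univ_nonempty
        (fun a' => Pols.sup' hPols (fun π => ⟪q π s' a', w⟫))))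
    -- `πg` is a GPI policy for `w` over `Π`
    (πg : S → A)
    (hπg : ∀ s a, Pols.sup' hPols (fun π => ⟪q π s a, w⟫) ≤
      Pols.sup' hPols (fun π => ⟪q π s (πg s), w⟫)) :
    ∀ π ∈ Pols, ∀ s a,
      ⟪q π s a, w⟫ ≤ q1gpi s a ∧ q1gpi s a ≤ ⟪q πg s a, w⟫ := by

  classical
  set f : S → A → ℝ := fun s a => Pols.sup' hPols (fun π => ⟪q π s a, w⟫) with hf
  -- scalarized Bellman expansion
  have hexp : ∀ π : S → A, ∀ s a,
      ⟪q π s a, w⟫ = ⟪r s a, w⟫ + γ * ∑ s', p s a s' * ⟪q π s' (π s'), w⟫ := by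
    intro π s a
    rw [hq π s a]
    rw [inner_add_left, real_inner_smul_left, sum_inner]
    simp [real_inner_smul_left, Finset.mul_sum, mul_assoc]
  -- policy improvement: f s a ≤ ⟪q πg s a, w⟫
  have key : ∀ s a, f s a ≤ ⟪q πg s a, w⟫ := by
    by_contra h
    push_neg at h
    obtain ⟨s₀, a₀, h0⟩ := h
    obtain ⟨⟨sm, am⟩, -, hmax⟩ := Finset.exists_max_image (Finset.univ : Finset (S × A))
      (fun x => f x.1 x.2 - ⟪q πg x.1 x.2, w⟫) ⟨(s₀, a₀), Finset.mem_univ _⟩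
    set δ : ℝ := f sm am - ⟪q πg sm am, w⟫ with hδ
    have hδmax : ∀ s a, f s a - ⟪q πg s a, w⟫ ≤ δ := fun s a => hmax (s, a) (Finset.mem_univ _)
    have hδpos : 0 < δ := lt_of_lt_of_le (sub_pos.mpr h0) (hδmax s₀ a₀)
    have hle : δ ≤ γ * δ := by
      have h1 : f sm am ≤ ⟪q πg sm am, w⟫ + γ * δ := by
        apply Finset.sup'_le
        intro π hπmem
        rw [hexp π sm am, hexp πg sm am]
        have hsum : ∑ s', p sm am s' * ⟪q π s' (π s'), w⟫
            ≤ ∑ s', p sm am s' * (⟪q πg s' (πg s'), w⟫ + δ) := by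
          apply Finset.sum_le_sum
          intro s' _
          apply mul_le_mul_of_nonneg_left _ (hp0 _ _ _)
          calc ⟪q π s' (π s'), w⟫ ≤ f s' (π s') := Finset.le_sup' (fun π' => ⟪q π' s' (π s'), w⟫) hπmem
            _ ≤ f s' (πg s') := hπg s' (π s')
            _ ≤ ⟪q πg s' (πg s'), w⟫ + δ := by
                have := hδmax s' (πg s'); linarith
        have hsum2 : ∑ s', p sm am s' * (⟪q πg s' (πg s'), w⟫ + δ)
            = (∑ s', p sm am s' * ⟪q πg s' (πg s'), w⟫) + δ := by
          simp [mul_add, Finset.sum_add_distrib, ← Finset.sum_mul, hp1]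
        have := mul_le_mul_of_nonneg_left hsum hγ0
        rw [hsum2] at this
        linarith [this]
      linarith [h1]
    nlinarith
  refine fun π hπmem s a => ⟨?_, ?_⟩
  · rw [hexp π s a, hq1gpi s a]
    have hsum : ∑ s', p s a s' * ⟪q π s' (π s'), w⟫
        ≤ ∑ s', p s a s' * ((Finset.univ : Finset A).sup' Finset.univ_nonempty
          (fun a' => Pols.sup' hPols (fun π => ⟪q π s' a', w⟫))) := by
      apply Finset.sum_le_sum
      intro s' _
      apply mul_le_mul_of_nonneg_left _ (hp0 _ _ _)
      calc ⟪q π s' (π s'), w⟫ ≤ f s' (π s') := Finset.le_sup' (fun π' => ⟪q π' s' (π s'), w⟫) hπmem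
        _ ≤ _ := Finset.le_sup' _ (Finset.mem_univ (π s'))
    nlinarith [mul_le_mul_of_nonneg_left hsum hγ0]
  · rw [hexp πg s a, hq1gpi s a]
    have hsum : ∑ s', p s a s' * ((Finset.univ : Finset A).sup' Finset.univ_nonempty
          (fun a' => Pols.sup' hPols (fun π => ⟪q π s' a', w⟫)))
        ≤ ∑ s', p s a s' * ⟪q πg s' (πg s'), w⟫ := by
      apply Finset.sum_le_sum
      intro s' _
      apply mul_le_mul_of_nonneg_left _ (hp0 _ _ _)
      apply Finset.sup'_le
      intro a' _
      calc f s' a' ≤ f s' (πg s') := hπg s' a'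
        _ ≤ ⟪q πg s' (πg s'), w⟫ := key s' (πg s')
    nlinarith [mul_le_mul_of_nonneg_left hsum hγ0]
end

section
/- In a finite MOMDP, let Π be a finite nonempty set of policies, let w be a weight vector, let π̂ ∈ Π, and define the one-step GPI value q^{1-GPI}_w s a = ⟪r s a, w⟫ + γ * ∑_{s'} p s a s' * (max_{a'} max_{π ∈ Π} ⟪q^π s' a', w⟫). Then q^{1-GPI}_w s a = ⟪q^{π̂} s a, w⟫ for all states s and actions a if and only if q*_w s a = ⟪q^{π̂} s a, w⟫ for all states s and actions a. -/
open scoped RealInnerProductSpace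

lemma aux_contraction {S A : Type} [Fintype S] [Fintype A] [Nonempty S] [Nonempty A]
    {γ : ℝ} (hγ1 : γ < 1) (g : S → A → ℝ)
    (h : ∀ s a, g s a ≤ γ * ((Finset.univ : Finset (S × A)).sup' Finset.univ_nonempty
      (fun sa => g sa.1 sa.2))) :
    ∀ s a, g s a ≤ 0 := by
  set M := (Finset.univ : Finset (S × A)).sup' Finset.univ_nonempty (fun sa => g sa.1 sa.2) with hMdef
  have hM : M ≤ γ * M := Finset.sup'_le _ _ fun sa _ => h sa.1 sa.2
  have hM0 : M ≤ 0 := by nlinarith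
  intro s a
  exact le_trans (Finset.le_sup' (f := fun sa : S × A => g sa.1 sa.2) (Finset.mem_univ (s, a))) hM0

/-- In a finite MOMDP, for a policy `π̂ ∈ Π`, the one-step GPI value `q^{1-GPI}_w`
coincides with the scalarized action-values of `π̂` everywhere if and only if `π̂`
is optimal for `w`. -/
theorem one_step_gpi_eq_iff_optimal {m : ℕ} {S A : Type}
    [Fintype S] [Fintype A] [Nonempty S] [Nonempty A]
    (p : S → A → S → ℝ) (hp0 : ∀ s a s', 0 ≤ p s a s')
    (hp1 : ∀ s a, ∑ s', p s a s' = 1)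
    (r : S → A → EuclideanSpace ℝ (Fin m))
    (γ : ℝ) (hγ0 : 0 ≤ γ) (hγ1 : γ < 1)
    -- the finite nonempty set of policies `Π`
    (Pols : Finset (S → A)) (hPols : Pols.Nonempty)
    (w : EuclideanSpace ℝ (Fin m))
    -- `q π` is the multi-objective action-value function of policy `π`
    (q : (S → A) → S → A → EuclideanSpace ℝ (Fin m))
    (hq : ∀ π : S → A, ∀ s a, q π s a = r s a + γ • ∑ s', p s a s' • q π s' (π s'))
    -- `qstar` is the optimal scalarized action-value function for `w`
    (qstar : S → A → ℝ)
    (hqstar : ∀ s a, qstar s a = ⟪r s a, w⟫ + γ * ∑ s', p s a s' *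
      ((Finset.univ : Finset A).sup' Finset.univ_nonempty (fun a' => qstar s' a')))
    -- `q1gpi` is the one-step GPI value function for `w` over `Π`
    (q1gpi : S → A → ℝ)
    (hq1gpi : ∀ s a, q1gpi s a = ⟪r s a, w⟫ + γ * ∑ s', p s a s' *
      ((Finset.univ : Finset A).sup' Finset.univ_nonempty
        (fun a' => Pols.sup' hPols (fun π => ⟪q π s' a', w⟫))))
    -- `πhat` is a policy in `Π`
    (πhat : S → A) (hπhat : πhat ∈ Pols) :
    (∀ s a, q1gpi s a = ⟪q πhat s a, w⟫) ↔
    (∀ s a, qstar s a = ⟪q πhat s a, w⟫) := by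
  -- scalarized Bellman equation for policy values
  have hf : ∀ π : S → A, ∀ s a, ⟪q π s a, w⟫ = ⟪r s a, w⟫ +
      γ * ∑ s', p s a s' * ⟪q π s' (π s'), w⟫ := by
    intro π s a
    rw [hq π s a, inner_add_left, real_inner_smul_left, sum_inner]
    simp [real_inner_smul_left, Finset.mul_sum, mul_assoc]
  -- sum bound helper
  have hsum : ∀ s a (x : S → ℝ) (M : ℝ), (∀ s', x s' ≤ M) →
      ∑ s', p s a s' * x s' ≤ M := by
    intro s a x M hx
    calc ∑ s', p s a s' * x s' ≤ ∑ s', p s a s' * M :=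
          Finset.sum_le_sum fun s' _ => mul_le_mul_of_nonneg_left (hx s') (hp0 s a s')
      _ = M := by rw [← Finset.sum_mul, hp1, one_mul]
  have hexpand : ∀ s a (x y : S → ℝ),
      ∑ s', p s a s' * (x s' - y s') = (∑ s', p s a s' * x s') - ∑ s', p s a s' * y s' := by
    intro s a x y
    simp [mul_sub, Finset.sum_sub_distrib]
  set maxq : S → ℝ := fun s' =>
    (Finset.univ : Finset A).sup' Finset.univ_nonempty (fun a' => qstar s' a') with hmaxq
  -- every policy value is ≤ qstar
  have hle : ∀ π : S → A, ∀ s a, ⟪q π s a, w⟫ ≤ qstar s a := by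
    intro π
    have key := aux_contraction hγ1 (fun s a => ⟪q π s a, w⟫ - qstar s a) ?_
    · intro s a; linarith [key s a]
    intro s a
    set M := (Finset.univ : Finset (S × A)).sup' Finset.univ_nonempty
      (fun sa => ⟪q π sa.1 sa.2, w⟫ - qstar sa.1 sa.2) with hMdef
    have hb : ∑ s', p s a s' * (⟪q π s' (π s'), w⟫ - maxq s') ≤ M := by
      apply hsum
      intro s'
      have h1 : qstar s' (π s') ≤ maxq s' :=
        Finset.le_sup' (fun a' => qstar s' a') (Finset.mem_univ (π s'))
      have h2 : ⟪q π s' (π s'), w⟫ - qstar s' (π s') ≤ M :=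
        Finset.le_sup' (fun sa : S × A => ⟪q π sa.1 sa.2, w⟫ - qstar sa.1 sa.2)
          (Finset.mem_univ (s', π s'))
      linarith
    have hmul := mul_le_mul_of_nonneg_left hb hγ0
    have heq := hexpand s a (fun s' => ⟪q π s' (π s'), w⟫) maxq
    have hfa := hf π s a
    have hqa := hqstar s a
    rw [heq] at hmul
    rw [mul_sub] at hmul
    linarith
  constructor
  · -- forward: q1gpi = f πhat everywhere → qstar = f πhat
    intro h1 s a
    have key := aux_contraction hγ1 (fun s a => qstar s a - ⟪q πhat s a, w⟫) ?_
    · have := key s a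
      have := hle πhat s a
      linarith
    intro s a
    set M := (Finset.univ : Finset (S × A)).sup' Finset.univ_nonempty
      (fun sa => qstar sa.1 sa.2 - ⟪q πhat sa.1 sa.2, w⟫) with hMdef
    set maxg : S → ℝ := fun s' => (Finset.univ : Finset A).sup' Finset.univ_nonempty
        (fun a' => Pols.sup' hPols (fun π => ⟪q π s' a', w⟫)) with hmaxg
    have hb : ∑ s', p s a s' * (maxq s' - maxg s') ≤ M := by
      apply hsum
      intro s'
      obtain ⟨a0, _, ha0⟩ := Finset.exists_mem_eq_sup' (Finset.univ_nonempty)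
        (fun a' => qstar s' a')
      have h1' : ⟪q πhat s' a0, w⟫ ≤ maxg s' := by
        refine le_trans (Finset.le_sup' (fun π => ⟪q π s' a0, w⟫) hπhat) ?_
        exact Finset.le_sup' (fun a' => Pols.sup' hPols (fun π => ⟪q π s' a', w⟫))
          (Finset.mem_univ a0)
      have h2' : qstar s' a0 - ⟪q πhat s' a0, w⟫ ≤ M :=
        Finset.le_sup' (fun sa : S × A => qstar sa.1 sa.2 - ⟪q πhat sa.1 sa.2, w⟫)
          (Finset.mem_univ (s', a0))
      have h3' : maxq s' = qstar s' a0 := ha0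
      linarith
    have hmul := mul_le_mul_of_nonneg_left hb hγ0
    have heq := hexpand s a maxq maxg
    have hqa := hqstar s a
    have hga := (hq1gpi s a).symm.trans (h1 s a)
    rw [heq] at hmul
    rw [mul_sub] at hmul
    have hfa := hf πhat s a
    linarith [hga ▸ hfa]
  · -- backward: qstar = f πhat everywhere → q1gpi = f πhat
    intro h2 s a
    have hsupeq : ∀ s' a', Pols.sup' hPols (fun π => ⟪q π s' a', w⟫) = qstar s' a' := by
      intro s' a'
      refine le_antisymm (Finset.sup'_le _ _ fun π _ => hle π s' a') ?_
      rw [h2 s' a']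
      exact Finset.le_sup' (fun π => ⟪q π s' a', w⟫) hπhat
    rw [hq1gpi s a, ← h2 s a, hqstar s a]
    congr 2
    apply Finset.sum_congr rfl
    intro s' _
    congr 1
    exact Finset.sup'_congr _ rfl fun a' _ => hsupeq s' a'
end

section
/- In a finite MOMDP, let r_max = max_{s,a} ‖r s a‖ (Euclidean norm). Then for any policy π, any weight vectors w, w' ∈ EuclideanSpace ℝ (Fin m), and all states s and actions a: |⟪q^π s a, w⟫ − ⟪q^π s a, w'⟫| ≤ (r_max / (1 − γ)) * ‖w − w'‖, and |q*_w s a − q*_{w'} s a| ≤ (r_max / (1 − γ)) * ‖w − w'‖; that is, both the scalarized action-values of any fixed policy and the optimal scalarized action-values are Lipschitz in the weight vector with constant r_max / (1 − γ). -/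
open scoped RealInnerProductSpace

private lemma abs_sup'_sub_sup'_le {A : Type} [Fintype A] [Nonempty A]
    (f g : A → ℝ) (D : ℝ) (h : ∀ a, |f a - g a| ≤ D) :
    |(Finset.univ : Finset A).sup' Finset.univ_nonempty f -
      (Finset.univ : Finset A).sup' Finset.univ_nonempty g| ≤ D := by
  rw [abs_le]
  constructor
  · have : (Finset.univ : Finset A).sup' Finset.univ_nonempty g ≤
      (Finset.univ : Finset A).sup' Finset.univ_nonempty f + D := by
      apply Finset.sup'_le
      intro a _
      have := h a
      have hf := Finset.le_sup' f (Finset.mem_univ a)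
      rw [abs_le] at this
      linarith
    linarith
  · have : (Finset.univ : Finset A).sup' Finset.univ_nonempty f ≤
      (Finset.univ : Finset A).sup' Finset.univ_nonempty g + D := by
      apply Finset.sup'_le
      intro a _
      have := h a
      have hg := Finset.le_sup' g (Finset.mem_univ a)
      rw [abs_le] at this
      linarith
    linarith

/-- In a finite MOMDP, both the scalarized action-values of a fixed policy and the
optimal scalarized action-values are Lipschitz in the weight vector with constant
`r_max / (1 − γ)`, where `r_max = max_{s,a} ‖r s a‖`. -/
theorem scalarized_values_lipschitz_in_weights {m : ℕ} {S A : Type}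
    [Fintype S] [Fintype A] [Nonempty S] [Nonempty A]
    (p : S → A → S → ℝ) (hp0 : ∀ s a s', 0 ≤ p s a s')
    (hp1 : ∀ s a, ∑ s', p s a s' = 1)
    (r : S → A → EuclideanSpace ℝ (Fin m))
    (γ : ℝ) (hγ0 : 0 ≤ γ) (hγ1 : γ < 1)
    -- `rmax = max_{s,a} ‖r s a‖`
    (rmax : ℝ)
    (hrmax : rmax = (Finset.univ : Finset (S × A)).sup' Finset.univ_nonempty
      (fun x => ‖r x.1 x.2‖))
    (π : S → A) (w w' : EuclideanSpace ℝ (Fin m))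
    -- `q` is the multi-objective action-value function of `π`
    (q : S → A → EuclideanSpace ℝ (Fin m))
    (hq : ∀ s a, q s a = r s a + γ • ∑ s', p s a s' • q s' (π s'))
    -- `qstarw` and `qstarw'` are the optimal scalarized action-value functions
    -- for `w` and `w'` respectively
    (qstarw qstarw' : S → A → ℝ)
    (hqstarw : ∀ s a, qstarw s a = ⟪r s a, w⟫ + γ * ∑ s', p s a s' *
      ((Finset.univ : Finset A).sup' Finset.univ_nonempty (fun a' => qstarw s' a')))
    (hqstarw' : ∀ s a, qstarw' s a = ⟪r s a, w'⟫ + γ * ∑ s', p s a s' *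
      ((Finset.univ : Finset A).sup' Finset.univ_nonempty (fun a' => qstarw' s' a'))) :
    ∀ s a,
      |⟪q s a, w⟫ - ⟪q s a, w'⟫| ≤ (rmax / (1 - γ)) * ‖w - w'‖ ∧
      |qstarw s a - qstarw' s a| ≤ (rmax / (1 - γ)) * ‖w - w'‖ := by
  have h1γ : (0:ℝ) < 1 - γ := by linarith
  have hr_le : ∀ s a, ‖r s a‖ ≤ rmax := by
    intro s a
    rw [hrmax]
    exact Finset.le_sup' (fun x : S × A => ‖r x.1 x.2‖) (Finset.mem_univ (s, a))
  have hrmax0 : 0 ≤ rmax := le_trans (norm_nonneg _) (hr_le Classical.ofNonempty Classical.ofNonempty)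
  -- Bound on ‖q s a‖
  set B : ℝ := (Finset.univ : Finset (S × A)).sup' Finset.univ_nonempty
    (fun x => ‖q x.1 x.2‖) with hBdef
  have hBle : ∀ s a, ‖q s a‖ ≤ B := fun s a =>
    Finset.le_sup' (fun x : S × A => ‖q x.1 x.2‖) (Finset.mem_univ (s, a))
  have hBrec : B ≤ rmax + γ * B := by
    apply Finset.sup'_le
    rintro ⟨s, a⟩ _
    simp only
    rw [hq s a]
    calc ‖r s a + γ • ∑ s', p s a s' • q s' (π s')‖
        ≤ ‖r s a‖ + ‖γ • ∑ s', p s a s' • q s' (π s')‖ := norm_add_le _ _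
      _ ≤ rmax + γ * B := by
          apply add_le_add (hr_le s a)
          rw [norm_smul, Real.norm_eq_abs, abs_of_nonneg hγ0]
          apply mul_le_mul_of_nonneg_left _ hγ0
          calc ‖∑ s', p s a s' • q s' (π s')‖ ≤ ∑ s', ‖p s a s' • q s' (π s')‖ :=
                norm_sum_le _ _
            _ ≤ ∑ s', p s a s' * B := by
                apply Finset.sum_le_sum
                intro s' _
                rw [norm_smul, Real.norm_eq_abs, abs_of_nonneg (hp0 s a s')]
                exact mul_le_mul_of_nonneg_left (hBle s' (π s')) (hp0 s a s')
            _ = B := by rw [← Finset.sum_mul, hp1 s a, one_mul]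
  have hBbound : B ≤ rmax / (1 - γ) := by
    rw [le_div_iff₀ h1γ]
    nlinarith
  -- Bound on |qstarw - qstarw'|
  set D : ℝ := (Finset.univ : Finset (S × A)).sup' Finset.univ_nonempty
    (fun x => |qstarw x.1 x.2 - qstarw' x.1 x.2|) with hDdef
  have hDle : ∀ s a, |qstarw s a - qstarw' s a| ≤ D := fun s a =>
    Finset.le_sup' (fun x : S × A => |qstarw x.1 x.2 - qstarw' x.1 x.2|) (Finset.mem_univ (s, a))
  have hDrec : D ≤ rmax * ‖w - w'‖ + γ * D := by
    apply Finset.sup'_le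
    rintro ⟨s, a⟩ _
    simp only
    rw [hqstarw s a, hqstarw' s a]
    have hrewrite : ⟪r s a, w⟫ + γ * (∑ s', p s a s' *
        ((Finset.univ : Finset A).sup' Finset.univ_nonempty (fun a' => qstarw s' a'))) -
        (⟪r s a, w'⟫ + γ * (∑ s', p s a s' *
        ((Finset.univ : Finset A).sup' Finset.univ_nonempty (fun a' => qstarw' s' a')))) =
        ⟪r s a, w - w'⟫ + γ * ∑ s', p s a s' *
          (((Finset.univ : Finset A).sup' Finset.univ_nonempty (fun a' => qstarw s' a')) -
           ((Finset.univ : Finset A).sup' Finset.univ_nonempty (fun a' => qstarw' s' a'))) := by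
      rw [inner_sub_right]
      simp only [mul_sub, Finset.sum_sub_distrib]
      ring
    rw [hrewrite]
    calc |⟪r s a, w - w'⟫ + γ * ∑ s', p s a s' * _|
        ≤ |⟪r s a, w - w'⟫| + |γ * ∑ s', p s a s' *
          (((Finset.univ : Finset A).sup' Finset.univ_nonempty (fun a' => qstarw s' a')) -
           ((Finset.univ : Finset A).sup' Finset.univ_nonempty (fun a' => qstarw' s' a')))| :=
          abs_add_le _ _
      _ ≤ rmax * ‖w - w'‖ + γ * D := by
          apply add_le_add
          · exact le_trans (abs_real_inner_le_norm _ _)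
              (mul_le_mul_of_nonneg_right (hr_le s a) (norm_nonneg _))
          · rw [abs_mul, abs_of_nonneg hγ0]
            apply mul_le_mul_of_nonneg_left _ hγ0
            calc |∑ s', p s a s' * _| ≤ ∑ s', |p s a s' *
                (((Finset.univ : Finset A).sup' Finset.univ_nonempty (fun a' => qstarw s' a')) -
                 ((Finset.univ : Finset A).sup' Finset.univ_nonempty (fun a' => qstarw' s' a')))| :=
                Finset.abs_sum_le_sum_abs _ _
              _ ≤ ∑ s', p s a s' * D := by
                  apply Finset.sum_le_sum
                  intro s' _
                  rw [abs_mul, abs_of_nonneg (hp0 s a s')]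
                  apply mul_le_mul_of_nonneg_left _ (hp0 s a s')
                  exact abs_sup'_sub_sup'_le _ _ D (fun a' => hDle s' a')
              _ = D := by rw [← Finset.sum_mul, hp1 s a, one_mul]
  have hDbound : D ≤ (rmax / (1 - γ)) * ‖w - w'‖ := by
    rw [div_mul_eq_mul_div, le_div_iff₀ h1γ]
    nlinarith
  intro s a
  constructor
  · rw [← inner_sub_right]
    calc |⟪q s a, w - w'⟫| ≤ ‖q s a‖ * ‖w - w'‖ := abs_real_inner_le_norm _ _
      _ ≤ (rmax / (1 - γ)) * ‖w - w'‖ :=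
          mul_le_mul_of_nonneg_right (le_trans (hBle s a) hBbound) (norm_nonneg _)
  · exact le_trans (hDle s a) hDbound
end

section
/- In a finite MOMDP, let n ≥ 1, let w_1, …, w_n be weight vectors in the weight simplex W_m with associated policies π_1, …, π_n, and let δ ≥ 0 satisfy |q*_{w_i} s a − ⟪q^{π_i} s a, w_i⟫| ≤ δ for all states s, actions a, and i ∈ {1, …, n}. Let r_max = max_{s,a} ‖r s a‖ (Euclidean norm). Then for every w ∈ W_m, every GPI policy π^GPI for w over Π = {π_1, …, π_n}, and all states s and actions a: q*_w s a − q^GPI_w s a ≤ (2 / (1 − γ)) * (r_max * min_{i} ‖w − w_i‖ + δ). -/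
open scoped RealInnerProductSpace

/-- Bound on the optimality gap of the GPI policy (Theorem 2 of Barreto et al., adapted):
given `n ≥ 1` weight vectors `w_i` in the simplex with associated policies `π_i` that are
`δ`-optimal for their respective weights, the scalarized value of any GPI policy for a
weight `w` over `Π = {π_1, …, π_n}` satisfies
`q*_w s a − q^GPI_w s a ≤ (2 / (1 − γ)) (r_max · min_i ‖w − w_i‖ + δ)`. -/
theorem gpi_utility_loss_bound {m : ℕ} {S A : Type}
    [Fintype S] [Fintype A] [Nonempty S] [Nonempty A]
    (p : S → A → S → ℝ) (hp0 : ∀ s a s', 0 ≤ p s a s')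
    (hp1 : ∀ s a, ∑ s', p s a s' = 1)
    (r : S → A → EuclideanSpace ℝ (Fin m))
    (γ : ℝ) (hγ0 : 0 ≤ γ) (hγ1 : γ < 1)
    -- `q π` is the multi-objective action-value function of policy `π`
    (q : (S → A) → S → A → EuclideanSpace ℝ (Fin m))
    (hq : ∀ π : S → A, ∀ s a, q π s a = r s a + γ • ∑ s', p s a s' • q π s' (π s'))
    -- `qstar v` is the optimal scalarized action-value function for weight vector `v`
    (qstar : EuclideanSpace ℝ (Fin m) → S → A → ℝ)
    (hqstar : ∀ v : EuclideanSpace ℝ (Fin m), ∀ s a,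
      qstar v s a = ⟪r s a, v⟫ + γ * ∑ s', p s a s' *
        ((Finset.univ : Finset A).sup' Finset.univ_nonempty (fun a' => qstar v s' a')))
    -- the `n ≥ 1` weight vectors `w_i` (indexed by a nonempty finite type) and
    -- their associated policies `π_i`
    {ι : Type} [Fintype ι] [Nonempty ι]
    (ws : ι → EuclideanSpace ℝ (Fin m)) (hws : ∀ i, ws i ∈ weightSimplex m)
    (πs : ι → S → A)
    (δ : ℝ) (hδ0 : 0 ≤ δ)
    (hδ : ∀ s a, ∀ i, |qstar (ws i) s a - ⟪q (πs i) s a, ws i⟫| ≤ δ)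
    -- `rmax = max_{s,a} ‖r s a‖`
    (rmax : ℝ)
    (hrmax : rmax = (Finset.univ : Finset (S × A)).sup' Finset.univ_nonempty
      (fun x => ‖r x.1 x.2‖))
    -- the weight vector `w` and a GPI policy `πg` for `w` over `Π = {π_1, …, π_n}`
    (w : EuclideanSpace ℝ (Fin m)) (hw : w ∈ weightSimplex m)
    (πg : S → A)
    (hπg : ∀ s a,
      (Finset.univ : Finset ι).sup' Finset.univ_nonempty (fun i => ⟪q (πs i) s a, w⟫) ≤
      (Finset.univ : Finset ι).sup' Finset.univ_nonempty
        (fun i => ⟪q (πs i) s (πg s), w⟫)) :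
    ∀ s a, qstar w s a - ⟪q πg s a, w⟫ ≤
      (2 / (1 - γ)) * (rmax *
        ((Finset.univ : Finset ι).inf' Finset.univ_nonempty (fun i => ‖w - ws i‖)) + δ) := by
  have hγ' : (0:ℝ) < 1 - γ := by linarith
  have hrle : ∀ s a, ‖r s a‖ ≤ rmax := by
    intro s a
    rw [hrmax]
    exact Finset.le_sup' (fun x : S × A => ‖r x.1 x.2‖) (Finset.mem_univ (s, a))
  have hrmax0 : 0 ≤ rmax :=
    le_trans (norm_nonneg _) (hrle (Classical.arbitrary S) (Classical.arbitrary A))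
  -- splitting sums of differences
  have hsplit : ∀ (s : S) (a : A) (X Y : S → ℝ),
      ∑ s', p s a s' * (X s' - Y s')
        = (∑ s', p s a s' * X s') - ∑ s', p s a s' * Y s' := by
    intro s a X Y
    rw [← Finset.sum_sub_distrib]
    exact Finset.sum_congr rfl fun s' _ => mul_sub _ _ _
  -- scalarized Bellman equation
  have hqw : ∀ (π : S → A) (v : EuclideanSpace ℝ (Fin m)) (s : S) (a : A),
      ⟪q π s a, v⟫ = ⟪r s a, v⟫ + γ * ∑ s', p s a s' * ⟪q π s' (π s'), v⟫ := by
    intro π v s a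
    rw [hq π s a, inner_add_left, real_inner_smul_left, sum_inner]
    simp only [real_inner_smul_left]
  -- uniform norm bound on the multi-objective value functions
  have hqnorm : ∀ (π : S → A) (s : S) (a : A), ‖q π s a‖ ≤ rmax / (1 - γ) := by
    intro π
    have hMle : ∀ s a, ‖q π s a‖ ≤ (Finset.univ : Finset (S × A)).sup' Finset.univ_nonempty
        (fun x => ‖q π x.1 x.2‖) := fun s a =>
      Finset.le_sup' (fun x : S × A => ‖q π x.1 x.2‖) (Finset.mem_univ (s, a))
    set M := (Finset.univ : Finset (S × A)).sup' Finset.univ_nonempty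
      (fun x => ‖q π x.1 x.2‖) with hM
    obtain ⟨x₀, -, hx₀⟩ := Finset.exists_mem_eq_sup' (Finset.univ_nonempty)
      (fun x : S × A => ‖q π x.1 x.2‖)
    rw [← hM] at hx₀
    have h2 : ‖∑ s', p x₀.1 x₀.2 s' • q π s' (π s')‖ ≤ ∑ s', p x₀.1 x₀.2 s' * M := by
      refine (norm_sum_le _ _).trans (Finset.sum_le_sum ?_)
      intro s' _
      rw [norm_smul, Real.norm_eq_abs, abs_of_nonneg (hp0 _ _ _)]
      exact mul_le_mul_of_nonneg_left (hMle s' (π s')) (hp0 _ _ _)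
    have h3 : ∑ s', p x₀.1 x₀.2 s' * M = M := by
      rw [← Finset.sum_mul, hp1, one_mul]
    have hstep : M ≤ rmax + γ * M := by
      calc M = ‖q π x₀.1 x₀.2‖ := hx₀
        _ = ‖r x₀.1 x₀.2 + γ • ∑ s', p x₀.1 x₀.2 s' • q π s' (π s')‖ := by rw [← hq]
        _ ≤ ‖r x₀.1 x₀.2‖ + ‖γ • ∑ s', p x₀.1 x₀.2 s' • q π s' (π s')‖ := norm_add_le _ _
        _ ≤ rmax + γ * M := by
            rw [norm_smul, Real.norm_eq_abs, abs_of_nonneg hγ0]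
            exact add_le_add (hrle _ _)
              (mul_le_mul_of_nonneg_left (h2.trans_eq h3) hγ0)
    have hfin : M ≤ rmax / (1 - γ) := by
      rw [le_div_iff₀ hγ']
      nlinarith
    intro s a
    exact (hMle s a).trans hfin
  -- difference of suprema over actions
  have hsup_abs : ∀ (f g : A → ℝ) (c : ℝ), (∀ a, |f a - g a| ≤ c) →
      |(Finset.univ : Finset A).sup' Finset.univ_nonempty f -
        (Finset.univ : Finset A).sup' Finset.univ_nonempty g| ≤ c := by
    intro f g c h
    rw [abs_sub_le_iff]
    constructor
    · rw [sub_le_iff_le_add]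
      apply Finset.sup'_le
      intro a _
      have h1 := (abs_sub_le_iff.mp (h a)).1
      have h2 : g a ≤ (Finset.univ : Finset A).sup' Finset.univ_nonempty g :=
        Finset.le_sup' g (Finset.mem_univ a)
      linarith
    · rw [sub_le_iff_le_add]
      apply Finset.sup'_le
      intro a _
      have h1 := (abs_sub_le_iff.mp (h a)).2
      have h2 : f a ≤ (Finset.univ : Finset A).sup' Finset.univ_nonempty f :=
        Finset.le_sup' f (Finset.mem_univ a)
      linarith
  -- Lipschitz continuity of `qstar` in the weight vector
  have hqstar_lip : ∀ (v v' : EuclideanSpace ℝ (Fin m)) (s : S) (a : A),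
      |qstar v s a - qstar v' s a| ≤ rmax * ‖v - v'‖ / (1 - γ) := by
    intro v v'
    have hMle : ∀ s a, |qstar v s a - qstar v' s a| ≤
        (Finset.univ : Finset (S × A)).sup' Finset.univ_nonempty
          (fun x => |qstar v x.1 x.2 - qstar v' x.1 x.2|) := fun s a =>
      Finset.le_sup' (fun x : S × A => |qstar v x.1 x.2 - qstar v' x.1 x.2|)
        (Finset.mem_univ (s, a))
    set M := (Finset.univ : Finset (S × A)).sup' Finset.univ_nonempty
      (fun x => |qstar v x.1 x.2 - qstar v' x.1 x.2|) with hM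
    obtain ⟨x₀, -, hx₀⟩ := Finset.exists_mem_eq_sup' (Finset.univ_nonempty)
      (fun x : S × A => |qstar v x.1 x.2 - qstar v' x.1 x.2|)
    rw [← hM] at hx₀
    have hV : ∀ s' : S,
        |(Finset.univ : Finset A).sup' Finset.univ_nonempty (fun a' => qstar v s' a') -
          (Finset.univ : Finset A).sup' Finset.univ_nonempty (fun a' => qstar v' s' a')| ≤ M :=
      fun s' => hsup_abs _ _ _ (fun a' => hMle s' a')
    have heq : qstar v x₀.1 x₀.2 - qstar v' x₀.1 x₀.2
        = ⟪r x₀.1 x₀.2, v - v'⟫ + γ * ∑ s', p x₀.1 x₀.2 s' *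
            ((Finset.univ : Finset A).sup' Finset.univ_nonempty (fun a' => qstar v s' a') -
              (Finset.univ : Finset A).sup' Finset.univ_nonempty (fun a' => qstar v' s' a')) := by
      rw [hqstar v, hqstar v', inner_sub_right, hsplit]
      ring
    have hstep : M ≤ rmax * ‖v - v'‖ + γ * M := by
      have h1 : |⟪r x₀.1 x₀.2, v - v'⟫| ≤ rmax * ‖v - v'‖ :=
        (abs_real_inner_le_norm _ _).trans
          (mul_le_mul_of_nonneg_right (hrle _ _) (norm_nonneg _))
      have h2 : |∑ s', p x₀.1 x₀.2 s' *
          ((Finset.univ : Finset A).sup' Finset.univ_nonempty (fun a' => qstar v s' a') -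
            (Finset.univ : Finset A).sup' Finset.univ_nonempty (fun a' => qstar v' s' a'))| ≤ M := by
        refine (Finset.abs_sum_le_sum_abs _ _).trans ?_
        have hb : ∀ s' ∈ (Finset.univ : Finset S), |p x₀.1 x₀.2 s' *
            ((Finset.univ : Finset A).sup' Finset.univ_nonempty (fun a' => qstar v s' a') -
              (Finset.univ : Finset A).sup' Finset.univ_nonempty (fun a' => qstar v' s' a'))|
            ≤ p x₀.1 x₀.2 s' * M := by
          intro s' _
          rw [abs_mul, abs_of_nonneg (hp0 _ _ _)]
          exact mul_le_mul_of_nonneg_left (hV s') (hp0 _ _ _)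
        refine (Finset.sum_le_sum hb).trans ?_
        rw [← Finset.sum_mul, hp1, one_mul]
      calc M = |qstar v x₀.1 x₀.2 - qstar v' x₀.1 x₀.2| := hx₀
        _ = |⟪r x₀.1 x₀.2, v - v'⟫ + γ * ∑ s', p x₀.1 x₀.2 s' *
            ((Finset.univ : Finset A).sup' Finset.univ_nonempty (fun a' => qstar v s' a') -
              (Finset.univ : Finset A).sup' Finset.univ_nonempty (fun a' => qstar v' s' a'))| := by
            rw [heq]
        _ ≤ |⟪r x₀.1 x₀.2, v - v'⟫| + |γ * ∑ s', p x₀.1 x₀.2 s' *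
            ((Finset.univ : Finset A).sup' Finset.univ_nonempty (fun a' => qstar v s' a') -
              (Finset.univ : Finset A).sup' Finset.univ_nonempty (fun a' => qstar v' s' a'))| :=
            abs_add_le _ _
        _ ≤ rmax * ‖v - v'‖ + γ * M := by
            refine add_le_add h1 ?_
            rw [abs_mul, abs_of_nonneg hγ0]
            exact mul_le_mul_of_nonneg_left h2 hγ0
    have hfin : M ≤ rmax * ‖v - v'‖ / (1 - γ) := by
      rw [le_div_iff₀ hγ']
      nlinarith
    intro s a
    exact (hMle s a).trans hfin
  -- the GPI policy dominates every constituent policy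
  have hGPI : ∀ (s : S) (a : A) (i : ι), ⟪q (πs i) s a, w⟫ ≤ ⟪q πg s a, w⟫ := by
    set F : S × A → ℝ := fun x => ⟪q πg x.1 x.2, w⟫ -
      (Finset.univ : Finset ι).sup' Finset.univ_nonempty (fun i => ⟪q (πs i) x.1 x.2, w⟫)
      with hF
    have hDle : ∀ s a, (Finset.univ : Finset (S × A)).inf' Finset.univ_nonempty F ≤ F (s, a) :=
      fun s a => Finset.inf'_le F (Finset.mem_univ (s, a))
    set D := (Finset.univ : Finset (S × A)).inf' Finset.univ_nonempty F with hD
    obtain ⟨x₀, -, hx₀⟩ := Finset.exists_mem_eq_inf' (Finset.univ_nonempty) F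
    rw [← hD] at hx₀
    obtain ⟨j, -, hj⟩ := Finset.exists_mem_eq_sup' (Finset.univ_nonempty)
      (fun i => ⟪q (πs i) x₀.1 x₀.2, w⟫)
    have hterm : ∀ s' : S, D ≤ ⟪q πg s' (πg s'), w⟫ - ⟪q (πs j) s' (πs j s'), w⟫ := by
      intro s'
      have h1 : ⟪q (πs j) s' (πs j s'), w⟫ ≤
          (Finset.univ : Finset ι).sup' Finset.univ_nonempty
            (fun i => ⟪q (πs i) s' (πs j s'), w⟫) :=
        Finset.le_sup' (fun i => ⟪q (πs i) s' (πs j s'), w⟫) (Finset.mem_univ j)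
      have h2 := hπg s' (πs j s')
      have h3 := hDle s' (πg s')
      simp only [hF] at h3
      linarith
    have heq : F x₀ = γ * ∑ s', p x₀.1 x₀.2 s' *
        (⟪q πg s' (πg s'), w⟫ - ⟪q (πs j) s' (πs j s'), w⟫) := by
      show ⟪q πg x₀.1 x₀.2, w⟫ - _ = _
      rw [hj, hqw πg w x₀.1 x₀.2, hqw (πs j) w x₀.1 x₀.2, hsplit]
      ring
    have hstep : γ * D ≤ D := by
      nth_rewrite 2 [hx₀]
      rw [heq]
      refine mul_le_mul_of_nonneg_left ?_ hγ0
      calc D = ∑ s', p x₀.1 x₀.2 s' * D := by rw [← Finset.sum_mul, hp1, one_mul]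
        _ ≤ ∑ s', p x₀.1 x₀.2 s' *
            (⟪q πg s' (πg s'), w⟫ - ⟪q (πs j) s' (πs j s'), w⟫) :=
          Finset.sum_le_sum (fun s' _ => mul_le_mul_of_nonneg_left (hterm s') (hp0 _ _ _))
    have hD0 : 0 ≤ D := by nlinarith
    intro s a i
    have h1 : ⟪q (πs i) s a, w⟫ ≤ (Finset.univ : Finset ι).sup' Finset.univ_nonempty
        (fun i => ⟪q (πs i) s a, w⟫) :=
      Finset.le_sup' (fun i => ⟪q (πs i) s a, w⟫) (Finset.mem_univ i)
    have h2 := hDle s a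
    simp only [hF] at h2
    linarith
  -- combine everything
  intro s a
  obtain ⟨i₀, -, hi₀⟩ := Finset.exists_mem_eq_inf' (Finset.univ_nonempty)
    (fun i : ι => ‖w - ws i‖)
  set d := (Finset.univ : Finset ι).inf' Finset.univ_nonempty (fun i => ‖w - ws i‖) with hd
  have hd0 : 0 ≤ d := by rw [hi₀]; exact norm_nonneg _
  have h1 := hGPI s a i₀
  have h2 : |qstar w s a - qstar (ws i₀) s a| ≤ rmax * d / (1 - γ) := by
    have h := hqstar_lip w (ws i₀) s a
    rwa [← hi₀] at h
  have h3 := hδ s a i₀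
  have h4 : |⟪q (πs i₀) s a, ws i₀⟫ - ⟪q (πs i₀) s a, w⟫| ≤ rmax / (1 - γ) * d := by
    rw [← inner_sub_right]
    refine (abs_real_inner_le_norm _ _).trans ?_
    have hn : ‖ws i₀ - w‖ = d := by rw [hi₀, norm_sub_rev]
    rw [hn]
    exact mul_le_mul_of_nonneg_right (hqnorm _ s a) hd0
  have h2' := (abs_le.mp h2).2
  have h3' := (abs_le.mp h3).2
  have h4' := (abs_le.mp h4).2
  have key : qstar w s a - ⟪q πg s a, w⟫ ≤ 2 * (rmax * d) / (1 - γ) + δ := by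
    have he : rmax * d / (1 - γ) + δ + rmax / (1 - γ) * d = 2 * (rmax * d) / (1 - γ) + δ := by
      ring
    linarith
  have hfin : 2 * (rmax * d) / (1 - γ) + δ ≤ 2 / (1 - γ) * (rmax * d + δ) := by
    have he : 2 / (1 - γ) * (rmax * d + δ) - (2 * (rmax * d) / (1 - γ) + δ)
        = δ * (1 + γ) / (1 - γ) := by
      field_simp
      ring
    have hpos : 0 ≤ δ * (1 + γ) / (1 - γ) :=
      div_nonneg (mul_nonneg hδ0 (by linarith)) (le_of_lt hγ')
    linarith
  exact key.trans hfin
end
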